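/- arXiv:0811.1878 — 6 statements merged into one kernel-verified Lean document; each statement's English description precedes it below -/
import Mathlib

section
/- For any propositional formula φ and any set W of valuations, a valuation w ∈ W satisfies φ if and only if w satisfies the disjunction, over all prime subvaluations v of φ modulo W, of the conjunction of the literals in v. -/
inductive Fml (α : Type) : Type
  | atom : α → Fml α
  | top : Fml α
  | bot : Fml α
  | neg : Fml α → Fml α
  | and : Fml α → Fml α → Fml α
  | or : Fml α → Fml α → Fml α

def Fml.eval {α : Type} (v : α → Bool) : Fml α → Bool
  | .atom p => v p
  | .top => true
  | .bot => false
  | .neg φ => !(Fml.eval v φ)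
  | .and φ ψ => Fml.eval v φ && Fml.eval v ψ
  | .or φ ψ => Fml.eval v φ || Fml.eval v ψ

/-- The set of atoms actually occurring in a formula. -/
def Fml.atoms {α : Type} : Fml α → Set α
  | .atom p => {p}
  | .top => ∅
  | .bot => ∅
  | .neg φ => Fml.atoms φ
  | .and φ ψ => Fml.atoms φ ∪ Fml.atoms ψ
  | .or φ ψ => Fml.atoms φ ∪ Fml.atoms ψ

/-- Classical (propositional) entailment. -/
def Fml.entails {α : Type} (φ ψ : Fml α) : Prop :=
  ∀ v : α → Bool, Fml.eval v φ = true → Fml.eval v ψ = true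

/-- Classical equivalence. -/
def Fml.equiv {α : Type} (φ ψ : Fml α) : Prop :=
  ∀ v : α → Bool, Fml.eval v φ = Fml.eval v ψ

/-- An atom is essential to `φ` iff it occurs in every formula classically equivalent to `φ`. -/
def essential {α : Type} (p : α) (φ : Fml α) : Prop :=
  ∀ ψ : Fml α, Fml.equiv φ ψ → p ∈ Fml.atoms ψ

/-- A valuation `w` extends a subvaluation (set of literals) `v`. -/
def extendsSub {α : Type} (w : α → Bool) (v : Set (α × Bool)) : Prop :=
  ∀ l ∈ v, w l.1 = l.2

/-- A subvaluation: a consistent set of literals (i.e. a subset of some valuation). -/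
def isSubval {α : Type} (v : Set (α × Bool)) : Prop :=
  ∀ p : α, ¬ ((p, true) ∈ v ∧ (p, false) ∈ v)

/-- `v` satisfies `φ` modulo the set of valuations `W`. -/
def satMod {α : Type} (W : Set (α → Bool)) (v : Set (α × Bool)) (φ : Fml α) : Prop :=
  ∀ w ∈ W, extendsSub w v → Fml.eval w φ = true

/-- `v` essentially satisfies `φ` modulo `W`. -/
def essSat {α : Type} (W : Set (α → Bool)) (v : Set (α × Bool)) (φ : Fml α) : Prop :=
  isSubval v ∧ satMod W v φ ∧ ∀ l ∈ v, essential l.1 φ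

/-- `v` is a prime subvaluation of `φ` modulo `W`. -/
def primeSubval {α : Type} (W : Set (α → Bool)) (v : Set (α × Bool)) (φ : Fml α) : Prop :=
  essSat W v φ ∧ ∀ v' : Set (α × Bool), v' ⊂ v → ¬ essSat W v' φ

/-!
An atom that is not essential to `φ` can be changed without changing the truth value of `φ`:
evaluate instead an equivalent formula in which it does not occur. Changing the finitely many
inessential atoms of `φ` one at a time shows that `φ` depends only on its essential atoms. Hence
the essential literals of a model `w` of `φ` satisfy `φ` outright; being finitely many, they
contain a minimal subset that still essentially satisfies `φ`, a prime subvaluation extended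
by `w`. The converse holds because a prime subvaluation satisfies `φ` modulo `W`.
-/

namespace Fml

variable {α : Type}

theorem atoms_finite (φ : Fml α) : φ.atoms.Finite := by
  induction φ with
  | atom p => exact Set.finite_singleton p
  | top | bot => exact Set.finite_empty
  | neg _ ih => exact ih
  | and _ _ ih₁ ih₂ | or _ _ ih₁ ih₂ => exact ih₁.union ih₂

theorem eval_congr {φ : Fml α} {v v' : α → Bool} (h : ∀ p ∈ φ.atoms, v p = v' p) :
    φ.eval v = φ.eval v' := by
  induction φ with
  | atom p => exact h p rfl
  | top | bot => rfl
  | neg _ ih => simp only [eval, ih h]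
  | and _ _ ih₁ ih₂ | or _ _ ih₁ ih₂ =>
    simp only [eval, ih₁ fun p hp => h p (Or.inl hp), ih₂ fun p hp => h p (Or.inr hp)]

end Fml

section Essential

variable {α : Type}

theorem mem_atoms_of_essential {p : α} {φ : Fml α} (h : essential p φ) : p ∈ φ.atoms :=
  h φ fun _ => rfl

theorem eval_update_of_not_essential [DecidableEq α] {p : α} {φ : Fml α} (h : ¬ essential p φ)
    (v : α → Bool) (b : Bool) : φ.eval (Function.update v p b) = φ.eval v := by
  obtain ⟨ψ, hψ, hp⟩ : ∃ ψ, φ.equiv ψ ∧ p ∉ ψ.atoms := by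
    simpa [essential] using h
  rw [hψ, hψ]
  exact Fml.eval_congr fun q hq => Function.update_of_ne (ne_of_mem_of_not_mem hq hp) _ _

theorem eval_eq_of_agree_on_essential (φ : Fml α) {v v' : α → Bool}
    (h : ∀ p, essential p φ → v p = v' p) : φ.eval v = φ.eval v' := by
  classical
  suffices key : ∀ (s : Finset α) (u : α → Bool), (∀ p ∈ φ.atoms, p ∈ s ∨ u p = v' p) →
      (∀ p, essential p φ → u p = v' p) → φ.eval u = φ.eval v' from
    key φ.atoms_finite.toFinset v (fun p hp => Or.inl (by simpa using hp)) h
  intro s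
  induction s using Finset.induction_on with
  | empty => exact fun u hu _ => Fml.eval_congr fun p hp => (hu p hp).resolve_left (by simp)
  | insert q s _ ih =>
    intro u hu hess
    have hupdate : φ.eval (Function.update u q (v' q)) = φ.eval u := by
      by_cases hq : essential q φ
      · rw [← hess q hq, Function.update_eq_self]
      · exact eval_update_of_not_essential hq u _
    rw [← hupdate]
    refine ih _ (fun p hp => ?_) (fun p hp => ?_)
    · rcases eq_or_ne p q with rfl | hpq
      · simp
      · simpa [Function.update_of_ne hpq, hpq] using hu p hp
    · rcases eq_or_ne p q with rfl | hpq
      · simp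
      · rw [Function.update_of_ne hpq, hess p hp]

theorem isSubval_of_extendsSub {w : α → Bool} {v : Set (α × Bool)} (h : extendsSub w v) :
    isSubval v := by
  rintro p ⟨ht, hf⟩
  exact Bool.noConfusion ((h (p, true) ht).symm.trans (h (p, false) hf))

def essentialLiterals (w : α → Bool) (φ : Fml α) : Set (α × Bool) :=
  {l | essential l.1 φ ∧ w l.1 = l.2}

theorem extendsSub_essentialLiterals (w : α → Bool) (φ : Fml α) :
    extendsSub w (essentialLiterals w φ) :=
  fun _ hl => hl.2

theorem essentialLiterals_finite (w : α → Bool) (φ : Fml α) :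
    (essentialLiterals w φ).Finite :=
  (φ.atoms_finite.prod Set.finite_univ).subset fun _ hl =>
    ⟨mem_atoms_of_essential hl.1, Set.mem_univ _⟩

theorem essSat_essentialLiterals (W : Set (α → Bool)) {w : α → Bool} {φ : Fml α}
    (hw : φ.eval w = true) : essSat W (essentialLiterals w φ) φ :=
  ⟨isSubval_of_extendsSub (extendsSub_essentialLiterals w φ),
    fun _ _ hw' => (eval_eq_of_agree_on_essential φ fun p hp => hw' (p, w p) ⟨hp, rfl⟩).trans hw,
    fun _ hl => hl.1⟩

theorem exists_primeSubval_subset {W : Set (α → Bool)} {φ : Fml α} {S : Set (α × Bool)}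
    (hS : S.Finite) (h : essSat W S φ) : ∃ v ⊆ S, primeSubval W v φ := by
  have hfin : {v | v ⊆ S ∧ essSat W v φ}.Finite := hS.finite_subsets.subset fun _ hv => hv.1
  obtain ⟨v, -, hmin⟩ := hfin.exists_le_minimal ⟨subset_rfl, h⟩
  exact ⟨v, hmin.prop.1, hmin.prop.2,
    fun v' hv' hess => hmin.not_ssubset ⟨hv'.subset.trans hmin.prop.1, hess⟩ hv'⟩

end Essential

/-- A valuation `w ∈ W` satisfies `φ` iff it satisfies the disjunction, over all prime
subvaluations `v` of `φ` modulo `W`, of the conjunction of the literals in `v`. -/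
theorem prime_subvaluation_disjunction {α : Type} (φ : Fml α) (W : Set (α → Bool)) :
    ∀ w ∈ W, (Fml.eval w φ = true ↔ ∃ v : Set (α × Bool), primeSubval W v φ ∧ extendsSub w v) := by
  intro w hw
  constructor
  · intro hφ
    obtain ⟨v, hvS, hv⟩ :=
      exists_primeSubval_subset (essentialLiterals_finite w φ) (essSat_essentialLiterals W hφ)
    exact ⟨v, hv, fun l hl => extendsSub_essentialLiterals w φ l (hvS hl)⟩
  · rintro ⟨v, hv, hwv⟩
    exact hv.1.2.1 w hw hwv
end

section
/- Let M = (W, R) be a PDL-model and φ → ⟨a⟩⊤ an executability law. The set of contraction outcomes Mods⁻(M, φ → ⟨a⟩⊤) is nonempty if and only if φ is satisfiable in some world of W. -/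
/-- A PDL-model: a set of possible worlds (propositional valuations) and, for each action,
an accessibility relation on worlds. -/
structure PDLModel (α β : Type) : Type where
  W : Set (α → Bool)
  R : β → Set ((α → Bool) × (α → Bool))

/-- Contraction outcomes of an executability law `φ → ⟨a⟩⊤` from a single model:
same worlds, arrows only removed, removed arrows leave `φ`-worlds, and some world
falsifies `φ → ⟨a⟩⊤`. -/
def ModsMinusExec {α β : Type} (M : PDLModel α β) (φ : Fml α) (a : β) :
    Set (PDLModel α β) :=
  {M' | M'.W = M.W ∧ (∀ b : β, M'.R b ⊆ M.R b) ∧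
        (∀ b : β, ∀ p ∈ M.R b \ M'.R b, Fml.eval p.1 φ = true) ∧
        (∃ w ∈ M'.W, Fml.eval w φ = true ∧ ∀ w', (w, w') ∉ M'.R a)}

/-! A contraction outcome keeps the worlds of `M` and contains a `φ`-world. Conversely, given a
`φ`-world, deleting every `a`-arrow that leaves a `φ`-world removes only permitted arrows and
leaves that world without `a`-successors. -/

namespace PDLModel

variable {α β : Type}

def cutArrowsFrom (M : PDLModel α β) (φ : Fml α) (a : β) : PDLModel α β where
  W := M.W
  R b := {p ∈ M.R b | ¬(b = a ∧ Fml.eval p.1 φ = true)}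

theorem cutArrowsFrom_mem_modsMinusExec {M : PDLModel α β} {φ : Fml α} (a : β)
    (hφ : ∃ w ∈ M.W, Fml.eval w φ = true) : M.cutArrowsFrom φ a ∈ ModsMinusExec M φ a := by
  obtain ⟨w, hw, hwφ⟩ := hφ
  refine ⟨rfl, fun b => Set.sep_subset _ _, ?_, w, hw, hwφ, ?_⟩
  · rintro b p ⟨hp, hcut⟩
    by_contra hpφ
    exact hcut ⟨hp, fun h => hpφ h.2⟩
  · rintro w' ⟨-, hkept⟩
    exact hkept ⟨rfl, hwφ⟩

theorem exists_eval_of_mem_modsMinusExec {M M' : PDLModel α β} {φ : Fml α} {a : β}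
    (hM' : M' ∈ ModsMinusExec M φ a) : ∃ w ∈ M.W, Fml.eval w φ = true := by
  obtain ⟨hW, -, -, w, hw, hwφ, -⟩ := hM'
  exact ⟨w, hW ▸ hw, hwφ⟩

end PDLModel

/-- `Mods⁻(M, φ → ⟨a⟩⊤)` is nonempty iff `φ` is satisfiable in some world of `W`. -/
theorem modsMinusExec_nonempty_iff {α β : Type} (M : PDLModel α β) (φ : Fml α) (a : β) :
    (ModsMinusExec M φ a).Nonempty ↔ ∃ w ∈ M.W, Fml.eval w φ = true :=
  ⟨fun ⟨_, hM'⟩ => PDLModel.exists_eval_of_mem_modsMinusExec hM',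
    fun hφ => ⟨_, PDLModel.cutArrowsFrom_mem_modsMinusExec a hφ⟩⟩
end

section
/- An action theory T is modular if and only if its big model is a model of T. -/
/-- Well-formedness: the accessibility relations relate worlds of the model. -/
def PDLModel.wf {α β : Type} (M : PDLModel α β) : Prop :=
  ∀ b : β, ∀ p ∈ M.R b, p.1 ∈ M.W ∧ p.2 ∈ M.W

/-- An action theory: static laws `S`, effect laws `E` (as triples `(φ, ψ, a)` standing for
`φ → [a]ψ`), and executability laws `X` (as pairs `(φ, a)` standing for `φ → ⟨a⟩⊤`). -/
structure Theory (α β : Type) : Type where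
  S : Set (Fml α)
  E : Set (Fml α × Fml α × β)
  X : Set (Fml α × β)

/-- Global truth of a theory in a model: all laws hold at all worlds. -/
def modelsT {α β : Type} (M : PDLModel α β) (T : Theory α β) : Prop :=
  M.wf ∧
  (∀ φ ∈ T.S, ∀ w ∈ M.W, Fml.eval w φ = true) ∧
  (∀ e ∈ T.E, ∀ w ∈ M.W, Fml.eval w e.1 = true →
      ∀ w', (w, w') ∈ M.R e.2.2 → Fml.eval w' e.2.1 = true) ∧
  (∀ x ∈ T.X, ∀ w ∈ M.W, Fml.eval w x.1 = true → ∃ w', (w, w') ∈ M.R x.2)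

/-- Global entailment of a propositional formula. -/
def entailsProp {α β : Type} (T : Theory α β) (φ : Fml α) : Prop :=
  ∀ M : PDLModel α β, modelsT M T → ∀ w ∈ M.W, Fml.eval w φ = true

/-- Modularity: every propositional formula globally entailed by `T` is a classical
consequence of the static laws alone. -/
def modular {α β : Type} (T : Theory α β) : Prop :=
  ∀ φ : Fml α, entailsProp T φ →
    ∀ v : α → Bool, (∀ σ ∈ T.S, Fml.eval v σ = true) → Fml.eval v φ = true

/-- All valuations satisfying the static laws of `T`. -/
def ValS {α β : Type} (T : Theory α β) : Set (α → Bool) :=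
  {v | ∀ σ ∈ T.S, Fml.eval v σ = true}

/-- The big model of `T`: worlds are all valuations of `S`, and `(w, w') ∈ R_a` iff for
every effect law `φ → [a]ψ` of `T`, `w ⊨ φ` implies `w' ⊨ ψ`. -/
def bigModel {α β : Type} (T : Theory α β) : PDLModel α β where
  W := ValS T
  R := fun a =>
    {p | p.1 ∈ ValS T ∧ p.2 ∈ ValS T ∧
      ∀ e ∈ T.E, e.2.2 = a → Fml.eval p.1 e.1 = true → Fml.eval p.2 e.2.1 = true}

/-!
A world `w` that lies in some model of `T` already satisfies every executability law in the big
model: its successors in that model are successors in the big model. Hence the big model is a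
model of `T` iff every valuation of the static laws lies in some model of `T`. Since `α` is finite,
each valuation `w` is pinned down by a formula `charFml w`; if `w` lies in no model of `T`, then
`T` globally entails `¬ charFml w`, and modularity forces `w` to violate the static laws.
-/

namespace Fml

variable {α : Type}

def conj (l : List (Fml α)) : Fml α :=
  l.foldr .and .top

theorem eval_conj (v : α → Bool) (l : List (Fml α)) :
    eval v (conj l) = true ↔ ∀ φ ∈ l, eval v φ = true := by
  induction l with
  | nil => simp [conj, eval]
  | cons φ l ih => simp [conj, eval, ← ih]

def lit (w : α → Bool) (p : α) : Fml α :=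
  if w p then .atom p else .neg (.atom p)

theorem eval_lit (w v : α → Bool) (p : α) : eval v (lit w p) = true ↔ v p = w p := by
  unfold lit
  cases w p <;> simp [eval]

noncomputable def charFml [Fintype α] (w : α → Bool) : Fml α :=
  conj (Finset.univ.toList.map (lit w))

theorem eval_charFml [Fintype α] (w v : α → Bool) : eval v (charFml w) = true ↔ v = w := by
  simp [charFml, eval_conj, eval_lit, funext_iff]

theorem eval_neg_charFml [Fintype α] (w v : α → Bool) :
    eval v (.neg (charFml w)) = true ↔ v ≠ w := by
  simp [eval, ← eval_charFml w v]

end Fml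

section

variable {α β : Type} {T : Theory α β} {M : PDLModel α β}

theorem modelsT.mem_ValS (hM : modelsT M T) {w : α → Bool} (hw : w ∈ M.W) : w ∈ ValS T :=
  fun σ hσ => hM.2.1 σ hσ w hw

theorem modelsT.mem_bigModel_R (hM : modelsT M T) {a : β} {w w' : α → Bool}
    (h : (w, w') ∈ M.R a) : (w, w') ∈ (bigModel T).R a := by
  obtain ⟨hw, hw'⟩ := hM.1 a _ h
  refine ⟨hM.mem_ValS hw, hM.mem_ValS hw', ?_⟩
  rintro e he rfl hφ
  exact hM.2.2.1 e he w hw hφ w' h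

theorem bigModel_wf (T : Theory α β) : (bigModel T).wf :=
  fun _ _ hp => ⟨hp.1, hp.2.1⟩

theorem modelsT_bigModel_iff_forall_exists_model :
    modelsT (bigModel T) T ↔ ∀ v ∈ ValS T, ∃ M, modelsT M T ∧ v ∈ M.W := by
  refine ⟨fun h v hv => ⟨bigModel T, h, hv⟩, fun h => ?_⟩
  refine ⟨bigModel_wf T, fun σ hσ w hw => hw σ hσ,
    fun e he w _ hφ w' hR => hR.2.2 e he rfl hφ, ?_⟩
  intro x hx w hw hφ
  obtain ⟨M, hM, hwM⟩ := h w hw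
  obtain ⟨w', hR⟩ := hM.2.2.2 x hx w hwM hφ
  exact ⟨w', hM.mem_bigModel_R hR⟩

theorem entailsProp_neg_charFml [Fintype α] {w : α → Bool}
    (h : ∀ M, modelsT M T → w ∉ M.W) : entailsProp T (.neg (Fml.charFml w)) := by
  intro M hM v hv
  exact (Fml.eval_neg_charFml w v).2 fun hvw => h M hM (hvw ▸ hv)

theorem modular_iff_forall_exists_model [Fintype α] :
    modular T ↔ ∀ v ∈ ValS T, ∃ M, modelsT M T ∧ v ∈ M.W := by
  refine ⟨fun hmod v hv => ?_, fun h φ hφ v hv => ?_⟩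
  · by_contra! hnone
    exact (Fml.eval_neg_charFml v v).1 (hmod _ (entailsProp_neg_charFml hnone) v hv) rfl
  · obtain ⟨M, hM, hvM⟩ := h v hv
    exact hφ M hM v hvM

end

theorem modular_iff_bigModel_general {α β : Type} [Fintype α] (T : Theory α β) :
    modular T ↔ modelsT (bigModel T) T := by
  rw [modular_iff_forall_exists_model, modelsT_bigModel_iff_forall_exists_model]

/-- An action theory is modular iff its big model is a model of it. -/
theorem modular_iff_bigModel {α β : Type} [Fintype α] [Fintype β] (T : Theory α β) :
    modular T ↔ modelsT (bigModel T) T :=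
  modular_iff_bigModel_general T
end

section
/- If an action theory T is modular and M_big is its big model, then for every model M = (W, R) of T there is a minimal (w.r.t. set inclusion) set R' ⊆ R_big \ R such that (Val(S), R ∪ R') is a model of T, where Val(S) is the set of all valuations satisfying the static laws S of T. -/
/-!
Modularity makes the big model a model of `T`. Suppose a valuation `w` of `S` satisfies the
precondition of an executability law for `a` but has no `R_big,a`-successor. Then every
valuation `v` of `S` is excluded by an effect law for `a` whose precondition holds at `w`; the
conjunction `Φ` of these preconditions with the executability precondition is unsatisfiable in
every model of `T`, so `T` entails `¬Φ` globally, and modularity carries this down to `w`, which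
satisfies `Φ`. Hence `R_big \ R` is an admissible extension.

The laws of `T` constrain the relation of each action separately, and for each action the
admissible extensions form a nonempty family of subsets of a finite set. Choosing a minimal one
per action gives a minimal extension.
-/

section

variable {α β : Type}

namespace Fml

noncomputable def iConj {ι : Type} [Fintype ι] (f : ι → Fml α) : Fml α :=
  (Finset.univ.toList.map f).foldr .and .top

theorem eval_iConj {ι : Type} [Fintype ι] (v : α → Bool) (f : ι → Fml α) :
    eval v (iConj f) = true ↔ ∀ i, eval v (f i) = true := by
  suffices h : ∀ l : List (Fml α),
      eval v (l.foldr .and .top) = true ↔ ∀ φ ∈ l, eval v φ = true by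
    simp [iConj, h]
  intro l
  induction l with
  | nil => simp [eval]
  | cons φ l ih => simp [eval, ih]

end Fml

theorem Minimal.pi {ι : Type*} {X : ι → Type*} [∀ i, Preorder (X i)] {P : ∀ i, X i → Prop}
    {f : ∀ i, X i} (h : ∀ i, Minimal (P i) (f i)) : Minimal (fun g => ∀ i, P i (g i)) f :=
  ⟨fun i => (h i).prop, fun _ hg hle i => (h i).2 (hg i) (hle i)⟩

namespace modelsT

variable {M : PDLModel α β} {T : Theory α β}

theorem mem_valS (hM : modelsT M T) {w : α → Bool} (hw : w ∈ M.W) : w ∈ ValS T :=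
  fun σ hσ => hM.2.1 σ hσ w hw

theorem rel_subset_bigModel (hM : modelsT M T) (b : β) : M.R b ⊆ (bigModel T).R b := by
  intro p hp
  obtain ⟨h1, h2⟩ := hM.1 b p hp
  exact ⟨hM.mem_valS h1, hM.mem_valS h2,
    fun e he hb hpre => hM.2.2.1 e he p.1 h1 hpre p.2 (hb ▸ hp)⟩

end modelsT

theorem entailsProp_neg_of_blocked {T : Theory α β} {φ : Fml α} {x : Fml α × β}
    (hx : x ∈ T.X) (hφx : φ.entails x.1)
    (hblock : ∀ v ∈ ValS T,
      ∃ e ∈ T.E, e.2.2 = x.2 ∧ φ.entails e.1 ∧ Fml.eval v e.2.1 = false) :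
    entailsProp T (.neg φ) := by
  intro M hM w hw
  suffices hφ : Fml.eval w φ ≠ true by simpa [Fml.eval] using hφ
  intro hφ
  obtain ⟨w', hww'⟩ := hM.2.2.2 x hx w hw (hφx w hφ)
  obtain ⟨e, he, hea, hφe, hw'e⟩ := hblock w' (hM.mem_valS (hM.1 x.2 _ hww').2)
  have := hM.2.2.1 e he w hw (hφe w hφ) w' (hea ▸ hww')
  simp_all

theorem bigModel_models [Fintype α] {T : Theory α β} (hmod : modular T) :
    modelsT (bigModel T) T := by
  classical
  refine ⟨fun b p hp => ⟨hp.1, hp.2.1⟩, fun φ hφ w hw => hw φ hφ,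
    fun e he w _ hpre w' hw' => hw'.2.2 e he rfl hpre, ?_⟩
  intro x hx w hw hwx
  by_contra! hstuck
  have hblocked : ∀ v : ValS T, ∃ e ∈ T.E,
      e.2.2 = x.2 ∧ Fml.eval w e.1 = true ∧ Fml.eval v e.2.1 = false := by
    rintro ⟨v, hv⟩
    by_contra! h
    exact hstuck v ⟨hw, hv, fun e he hea hwe => by simpa using h e he hea hwe⟩
  choose e he hea hwe hve using hblocked
  let Φ := Fml.and x.1 (Fml.iConj fun v => (e v).1)
  have hΦ : ∀ u, Fml.eval u Φ = true ↔
      Fml.eval u x.1 = true ∧ ∀ v, Fml.eval u (e v).1 = true := by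
    simp [Φ, Fml.eval, Fml.eval_iConj]
  have hnegΦ : entailsProp T (.neg Φ) :=
    entailsProp_neg_of_blocked hx (fun u hu => ((hΦ u).1 hu).1)
      fun v hv => ⟨e ⟨v, hv⟩, he _, hea _, fun u hu => ((hΦ u).1 hu).2 _, hve ⟨v, hv⟩⟩
  have := hmod _ hnegΦ w hw
  simp [Fml.eval, (hΦ w).2 ⟨hwx, hwe⟩] at this

def ActionLawsHold (T : Theory α β) (W : Set (α → Bool)) (b : β)
    (r : Set ((α → Bool) × (α → Bool))) : Prop :=
  (∀ p ∈ r, p.1 ∈ W ∧ p.2 ∈ W) ∧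
  (∀ e ∈ T.E, e.2.2 = b → ∀ w ∈ W, Fml.eval w e.1 = true →
      ∀ w', (w, w') ∈ r → Fml.eval w' e.2.1 = true) ∧
  (∀ x ∈ T.X, x.2 = b → ∀ w ∈ W, Fml.eval w x.1 = true → ∃ w', (w, w') ∈ r)

theorem modelsT_valS_iff {T : Theory α β} {R : β → Set ((α → Bool) × (α → Bool))} :
    modelsT ⟨ValS T, R⟩ T ↔ ∀ b, ActionLawsHold T (ValS T) b (R b) := by
  constructor
  · rintro ⟨hwf, -, hE, hX⟩ b
    exact ⟨hwf b, fun e he hb => hb ▸ hE e he, fun x hx hb => hb ▸ hX x hx⟩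
  · intro h
    exact ⟨fun b => (h b).1, fun φ hφ w hw => hw φ hφ,
      fun e he => (h e.2.2).2.1 e he rfl, fun x hx => (h x.2).2.2 x hx rfl⟩

end

theorem minimal_extension_exists_general {α β : Type} [Fintype α] (T : Theory α β)
    (hmod : modular T) (M : PDLModel α β) (hM : modelsT M T) :
    ∃ R' : β → Set ((α → Bool) × (α → Bool)),
      (∀ b : β, R' b ⊆ (bigModel T).R b \ M.R b) ∧
      modelsT ⟨ValS T, fun b => M.R b ∪ R' b⟩ T ∧
      (∀ R'' : β → Set ((α → Bool) × (α → Bool)),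
        (∀ b : β, R'' b ⊆ (bigModel T).R b \ M.R b) →
        modelsT ⟨ValS T, fun b => M.R b ∪ R'' b⟩ T →
        (∀ b : β, R'' b ⊆ R' b) → R'' = R') := by
  classical
  let Ext (b : β) (r : Set ((α → Bool) × (α → Bool))) : Prop :=
    r ⊆ (bigModel T).R b \ M.R b ∧ ActionLawsHold T (ValS T) b (M.R b ∪ r)
  have hbig : ∀ b, Ext b ((bigModel T).R b \ M.R b) := fun b =>
    ⟨subset_rfl, by
      rw [Set.union_sdiff_cancel (hM.rel_subset_bigModel b)]
      exact modelsT_valS_iff.1 (bigModel_models hmod) b⟩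
  choose R' hR' using fun b => exists_minimal_of_wellFoundedLT (Ext b) ⟨_, hbig b⟩
  refine ⟨R', fun b => (hR' b).prop.1, modelsT_valS_iff.2 fun b => (hR' b).prop.2,
    fun R'' hsub hmodels hle => ?_⟩
  exact (Minimal.pi hR').eq_of_le (fun b => ⟨hsub b, modelsT_valS_iff.1 hmodels b⟩) hle

/-- If `T` is modular, then every model `M = (W, R)` of `T` admits a minimal (w.r.t. set
inclusion) extension `R' ⊆ R_big \ R` such that `(Val(S), R ∪ R')` is a model of `T`. -/
theorem minimal_extension_exists {α β : Type} [Fintype α] [Fintype β] (T : Theory α β)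
    (hmod : modular T) (M : PDLModel α β) (hM : modelsT M T) :
    ∃ R' : β → Set ((α → Bool) × (α → Bool)),
      (∀ b : β, R' b ⊆ (bigModel T).R b \ M.R b) ∧
      modelsT ⟨ValS T, fun b => M.R b ∪ R' b⟩ T ∧
      (∀ R'' : β → Set ((α → Bool) × (α → Bool)),
        (∀ b : β, R'' b ⊆ (bigModel T).R b \ M.R b) →
        modelsT ⟨ValS T, fun b => M.R b ∪ R'' b⟩ T →
        (∀ b : β, R'' b ⊆ R' b) → R'' = R') :=
  minimal_extension_exists_general T hmod M hM
end

section
/- Let T be a modular action theory and Φ a law. Then T globally entails Φ if and only if every model of T of the form M' = (Val(S), R') with R ⊆ R' for some model (W, R) of T is a model of Φ. -/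
/-- Laws of an action theory: static laws, effect laws `φ → [a]ψ`, and
executability laws `φ → ⟨a⟩⊤`. -/
inductive Law (α β : Type) : Type
  | static : Fml α → Law α β
  | effect : Fml α → Fml α → β → Law α β
  | exec : Fml α → β → Law α β

/-- Truth of a law at a world of a model. -/
def holdsAt {α β : Type} (M : PDLModel α β) (w : α → Bool) : Law α β → Prop
  | .static φ => Fml.eval w φ = true
  | .effect φ ψ a => Fml.eval w φ = true → ∀ w', (w, w') ∈ M.R a → Fml.eval w' ψ = true
  | .exec φ a => Fml.eval w φ = true → ∃ w', (w, w') ∈ M.R a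

/-- Global truth of a law in a model. -/
def holdsG {α β : Type} (M : PDLModel α β) (L : Law α β) : Prop :=
  ∀ w ∈ M.W, holdsAt M w L

/-- Global entailment of a law by a theory. -/
def entailsT {α β : Type} (T : Theory α β) (L : Law α β) : Prop :=
  ∀ M : PDLModel α β, modelsT M T → holdsG M L

/-!
A model `M` of `T` is enlarged to a model on all of `Val(S)` whose relations contain those of `M`:
at a world of `M` nothing changes, and a new world `w` gets the transitions of the big model.
These satisfy the effect laws by construction; the executability laws hold at `w` because
modularity places `w` in some model `N` of `T`: otherwise the negation of the state description
of `w` would be globally entailed by `T` without following from `S`. As the worlds of `M` keep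
their transitions, every law true in the enlarged model is true in `M`.
-/

def Fml.stateDesc {α : Type} (w : α → Bool) : List α → Fml α
  | [] => .top
  | p :: l => .and (if w p then .atom p else .neg (.atom p)) (Fml.stateDesc w l)

theorem Fml.eval_stateDesc_eq_true_iff {α : Type} (w v : α → Bool) (l : List α) :
    Fml.eval v (Fml.stateDesc w l) = true ↔ ∀ p ∈ l, v p = w p := by
  induction l with
  | nil => simp [Fml.stateDesc, Fml.eval]
  | cons p l ih =>
    have literal : Fml.eval v (if w p then .atom p else .neg (.atom p)) = true ↔ v p = w p := by
      cases w p <;> simp [Fml.eval]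
    simp only [Fml.stateDesc, Fml.eval, Bool.and_eq_true, literal, ih, List.forall_mem_cons]

theorem Fml.eval_stateDesc_univ_eq_true_iff {α : Type} [Fintype α] (w v : α → Bool) :
    Fml.eval v (Fml.stateDesc w Finset.univ.toList) = true ↔ v = w := by
  simp [Fml.eval_stateDesc_eq_true_iff, funext_iff]

section

variable {α β : Type} {T : Theory α β}

theorem subset_valS_of_modelsT {M : PDLModel α β} (hM : modelsT M T) : M.W ⊆ ValS T :=
  fun w hw σ hσ => hM.2.1 σ hσ w hw

theorem exists_modelsT_mem_of_mem_valS [Fintype α] (hmod : modular T) {w : α → Bool}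
    (hw : w ∈ ValS T) : ∃ N : PDLModel α β, modelsT N T ∧ w ∈ N.W := by
  by_contra! hnot
  have hent : entailsProp T (.neg (Fml.stateDesc w Finset.univ.toList)) := by
    intro N hN u hu
    have hne : u ≠ w := fun h => hnot N hN (h ▸ hu)
    simpa [Fml.eval, Bool.eq_false_iff, Fml.eval_stateDesc_univ_eq_true_iff] using hne
  simpa [Fml.eval, Bool.eq_false_iff, Fml.eval_stateDesc_univ_eq_true_iff] using hmod _ hent w hw

theorem mem_bigModel_R_of_modelsT {N : PDLModel α β} (hN : modelsT N T) {a : β}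
    {p : (α → Bool) × (α → Bool)} (hp : p ∈ N.R a) : p ∈ (bigModel T).R a := by
  obtain ⟨hp₁, hp₂⟩ := hN.1 a p hp
  exact ⟨subset_valS_of_modelsT hN hp₁, subset_valS_of_modelsT hN hp₂,
    fun e he hea hφ => hN.2.2.1 e he p.1 hp₁ hφ p.2 (hea ▸ hp)⟩

theorem exists_mem_bigModel_R_of_mem_X [Fintype α] (hmod : modular T) {x : Fml α × β} (hx : x ∈ T.X)
    {w : α → Bool} (hw : w ∈ ValS T) (hφ : Fml.eval w x.1 = true) :
    ∃ w', (w, w') ∈ (bigModel T).R x.2 := by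
  obtain ⟨N, hN, hwN⟩ := exists_modelsT_mem_of_mem_valS (β := β) hmod hw
  obtain ⟨w', hr⟩ := hN.2.2.2 x hx w hwN hφ
  exact ⟨w', mem_bigModel_R_of_modelsT hN hr⟩

def PDLModel.extendToValS (M : PDLModel α β) (T : Theory α β) : PDLModel α β where
  W := ValS T
  R b := M.R b ∪ {p | p ∈ (bigModel T).R b ∧ p.1 ∉ M.W}

theorem PDLModel.modelsT_extendToValS [Fintype α] (hmod : modular T) {M : PDLModel α β}
    (hM : modelsT M T) : modelsT (M.extendToValS T) T := by
  have hWV := subset_valS_of_modelsT hM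
  refine ⟨?wf, fun φ hφ w hw => hw φ hφ, ?effect, ?exec⟩
  case wf =>
    rintro b p (hp | ⟨hp, -⟩)
    · exact ⟨hWV (hM.1 b p hp).1, hWV (hM.1 b p hp).2⟩
    · exact ⟨hp.1, hp.2.1⟩
  case effect =>
    rintro e he w - hφ w' (hr | ⟨hr, -⟩)
    · exact hM.2.2.1 e he w (hM.1 e.2.2 _ hr).1 hφ w' hr
    · exact hr.2.2 e he rfl hφ
  case exec =>
    intro x hx w hw hφ
    by_cases hwM : w ∈ M.W
    · obtain ⟨w', hr⟩ := hM.2.2.2 x hx w hwM hφ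
      exact ⟨w', Or.inl hr⟩
    · obtain ⟨w', hr⟩ := exists_mem_bigModel_R_of_mem_X hmod hx hw hφ
      exact ⟨w', Or.inr ⟨hr, hwM⟩⟩

theorem PDLModel.holdsG_of_holdsG_extendToValS {M : PDLModel α β} (hM : modelsT M T)
    {Φ : Law α β} (hΦ : holdsG (M.extendToValS T) Φ) : holdsG M Φ := by
  intro w hw
  have hΦw := hΦ w (subset_valS_of_modelsT hM hw)
  cases Φ with
  | static φ => exact hΦw
  | effect φ ψ a => exact fun hφ w' hr => hΦw hφ w' (Or.inl hr)
  | exec φ a =>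
    intro hφ
    obtain ⟨w', hr | ⟨-, hwM⟩⟩ := hΦw hφ
    · exact ⟨w', hr⟩
    · exact absurd hw hwM

end

theorem entails_iff_valS_models_general {α β : Type} [Fintype α] (T : Theory α β)
    (hmod : modular T) (Φ : Law α β) :
    entailsT T Φ ↔
      ∀ (M : PDLModel α β) (R' : β → Set ((α → Bool) × (α → Bool))),
        modelsT M T → (∀ b : β, M.R b ⊆ R' b) →
        modelsT ⟨ValS T, R'⟩ T → holdsG ⟨ValS T, R'⟩ Φ := by
  refine ⟨fun h _ R' _ _ hM' => h ⟨ValS T, R'⟩ hM', fun h M hM => ?_⟩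
  exact PDLModel.holdsG_of_holdsG_extendToValS hM <|
    h M _ hM (fun _ => Set.subset_union_left) (PDLModel.modelsT_extendToValS hmod hM)

/-- For modular `T`, `T` globally entails a law `Φ` iff every model of `T` of the form
`(Val(S), R')` with `R ⊆ R'` for some model `(W, R)` of `T` is a model of `Φ`. -/
theorem entails_iff_valS_models {α β : Type} [Fintype α] [Fintype β] (T : Theory α β)
    (hmod : modular T) (Φ : Law α β) :
    entailsT T Φ ↔
      ∀ (M : PDLModel α β) (R' : β → Set ((α → Bool) × (α → Bool))),
        modelsT M T → (∀ b : β, M.R b ⊆ R' b) →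
        modelsT ⟨ValS T, R'⟩ T → holdsG ⟨ValS T, R'⟩ Φ :=
  entails_iff_valS_models_general T hmod Φ
end

section
/- (Monotonicity of contraction) For every action theory T, every law Φ, and every theory T' in the contracted family T ⊖ Φ produced by the contraction algorithms, T globally entails every formula of T'. -/
/-- The static laws of a theory (here a theory is a set of laws). -/
def statics {α β : Type} (T : Set (Law α β)) : Set (Fml α) :=
  {φ | Law.static φ ∈ T}

/-- Global truth of a theory (a set of laws) in a model. -/
def ModelsL {α β : Type} (M : PDLModel α β) (T : Set (Law α β)) : Prop :=
  M.wf ∧ ∀ L ∈ T, holdsG M L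

/-- Global entailment of a law by a theory. -/
def EntailsL {α β : Type} (T : Set (Law α β)) (L : Law α β) : Prop :=
  ∀ M : PDLModel α β, ModelsL M T → holdsG M L

/-- Modularity: every propositional formula globally entailed by `T` is a classical
consequence of the static laws of `T` alone. -/
def ModularL {α β : Type} (T : Set (Law α β)) : Prop :=
  ∀ φ : Fml α, EntailsL T (Law.static φ) →
    ∀ v : α → Bool, (∀ σ ∈ statics T, Fml.eval v σ = true) → Fml.eval v φ = true

/-- `ContractOut T Φ T'` holds iff `T'` is one of the action theories produced by the
contraction algorithms applied to `T` and the law `Φ`.  If `T ⊭ Φ`, the algorithms return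
`T` unchanged.  Otherwise:
* contracting an executability law `φ → ⟨a⟩⊤` weakens each executability law
  `φᵢ → ⟨a⟩⊤` to `(φᵢ ∧ ¬χ) → ⟨a⟩⊤`, where `χ = π ∧ φ_A` describes (given the static laws)
  a particular `φ`-context;
* contracting an effect law `φ → [a]ψ` replaces each law `φᵢ → [a]ψᵢ` of a selected set
  `Em` of effect laws for `a` by `(φᵢ ∧ ¬χ) → [a]ψᵢ` and `(φᵢ ∧ χ) → [a](ψᵢ ∨ π')`, where
  `χ` is a `φ`-context and `π'` is a prime implicant of `S ∧ ¬ψ`, and adds frame-preserving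
  laws `(χ ∧ ℓ) → [a](ψ ∨ ℓ)` for selected literals `ℓ`;
* contracting a static law `φ` replaces the static laws by some classical contraction
  outcome `Sm` (classically entailed by `S`), weakens each executability law `φᵢ → ⟨a⟩⊤` to
  `(φᵢ ∧ φ) → ⟨a⟩⊤`, and adds `¬φ → [a]⊥` for every action `a`. -/
inductive ContractOut {α β : Type} (T : Set (Law α β)) : Law α β → Set (Law α β) → Prop
  | keep (Φ : Law α β) :
      ¬ EntailsL T Φ → ContractOut T Φ T
  | exec (φ χ : Fml α) (a : β) :
      EntailsL T (Law.exec φ a) →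
      (∀ v : α → Bool, (∀ σ ∈ statics T, Fml.eval v σ = true) →
        Fml.eval v χ = true → Fml.eval v φ = true) →
      ContractOut T (Law.exec φ a)
        ({L ∈ T | ∀ φi : Fml α, L ≠ Law.exec φi a} ∪
         {L | ∃ φi : Fml α, Law.exec φi a ∈ T ∧ L = Law.exec (Fml.and φi (Fml.neg χ)) a})
  | effect (φ ψ χ π' : Fml α) (a : β) (Em : Set (Law α β)) (Lits : Set (Fml α)) :
      EntailsL T (Law.effect φ ψ a) →
      Em ⊆ {L ∈ T | ∃ φi ψi : Fml α, L = Law.effect φi ψi a} →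
      (∀ v : α → Bool, (∀ σ ∈ statics T, Fml.eval v σ = true) →
        Fml.eval v χ = true → Fml.eval v φ = true) →
      (∀ v : α → Bool, (∀ σ ∈ statics T, Fml.eval v σ = true) →
        Fml.eval v π' = true → Fml.eval v ψ = false) →
      ContractOut T (Law.effect φ ψ a)
        ((T \ Em) ∪
         {L | ∃ φi ψi : Fml α, Law.effect φi ψi a ∈ Em ∧
                L = Law.effect (Fml.and φi (Fml.neg χ)) ψi a} ∪
         {L | ∃ φi ψi : Fml α, Law.effect φi ψi a ∈ Em ∧
                L = Law.effect (Fml.and φi χ) (Fml.or ψi π') a} ∪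
         {L | ∃ ℓ ∈ Lits, L = Law.effect (Fml.and χ ℓ) (Fml.or ψ ℓ) a})
  | static (φ : Fml α) (Sm : Set (Fml α)) :
      EntailsL T (Law.static φ) →
      (∀ v : α → Bool, (∀ σ ∈ statics T, Fml.eval v σ = true) →
        ∀ σ' ∈ Sm, Fml.eval v σ' = true) →
      ContractOut T (Law.static φ)
        ({L | ∃ σ ∈ Sm, L = Law.static σ} ∪
         {L ∈ T | (∀ σ : Fml α, L ≠ Law.static σ) ∧ (∀ (φi : Fml α) (a : β), L ≠ Law.exec φi a)} ∪
         {L | ∃ (φi : Fml α) (a : β), Law.exec φi a ∈ T ∧ L = Law.exec (Fml.and φi φ) a} ∪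
         {L | ∃ a : β, L = Law.effect (Fml.neg φ) Fml.bot a})

/-
Each contraction step only weakens laws of `T`: executability laws get stronger antecedents,
effect laws get stronger antecedents or weaker consequents, and static laws are replaced by
classical consequences of the static laws of `T`; since every world of a model of `T`
satisfies its static laws, these comparisons need only hold modulo them.  The genuinely new
laws are the frame laws `(χ ∧ ℓ) → [a](ψ ∨ ℓ)`, which follow from the contracted law
`φ → [a]ψ` because `χ` implies `φ` modulo the static laws, and `¬φ → [a]⊥`, which holds
vacuously because `T` entails `φ`.
-/

def Fml.EntailsUnder {α : Type} (S : Set (Fml α)) (φ ψ : Fml α) : Prop :=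
  ∀ v : α → Bool, (∀ σ ∈ S, Fml.eval v σ = true) → Fml.eval v φ = true → Fml.eval v ψ = true

namespace Fml

variable {α : Type} {S : Set (Fml α)} {φ ψ χ : Fml α}

theorem entails.entailsUnder (h : φ.entails ψ) : EntailsUnder S φ ψ :=
  fun v _ => h v

theorem EntailsUnder.refl (φ : Fml α) : EntailsUnder S φ φ :=
  fun _ _ => id

theorem EntailsUnder.trans (h₁ : EntailsUnder S φ ψ) (h₂ : EntailsUnder S ψ χ) :
    EntailsUnder S φ χ :=
  fun v hS hφ => h₂ v hS (h₁ v hS hφ)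

theorem and_entails_left : (Fml.and φ ψ).entails φ := by
  intro v hv
  simp only [eval, Bool.and_eq_true] at hv
  exact hv.1

theorem entails_or_left : φ.entails (Fml.or φ ψ) := by
  intro v hv
  simp [eval, hv]

end Fml

section Entailment

variable {α β : Type} {T : Set (Law α β)} {M : PDLModel α β}

theorem ModelsL.eval_statics (hM : ModelsL M T) {w : α → Bool} (hw : w ∈ M.W) :
    ∀ σ ∈ statics T, Fml.eval w σ = true :=
  fun _ hσ => hM.2 _ hσ w hw

theorem EntailsL.of_mem {L : Law α β} (hL : L ∈ T) : EntailsL T L :=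
  fun _ hM => hM.2 L hL

theorem EntailsL.static_of_statics {φ : Fml α}
    (h : ∀ v : α → Bool, (∀ σ ∈ statics T, Fml.eval v σ = true) → Fml.eval v φ = true) :
    EntailsL T (Law.static φ) :=
  fun _ hM w hw => h w (hM.eval_statics hw)

theorem EntailsL.exec_mono {φ φ' : Fml α} {a : β} (h : EntailsL T (Law.exec φ a))
    (hφ : Fml.EntailsUnder (statics T) φ' φ) : EntailsL T (Law.exec φ' a) :=
  fun M hM w hw hφ' => h M hM w hw (hφ w (hM.eval_statics hw) hφ')

theorem EntailsL.effect_mono {φ φ' ψ ψ' : Fml α} {a : β} (h : EntailsL T (Law.effect φ ψ a))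
    (hφ : Fml.EntailsUnder (statics T) φ' φ) (hψ : Fml.EntailsUnder (statics T) ψ ψ') :
    EntailsL T (Law.effect φ' ψ' a) := by
  intro M hM w hw hφ' w' hR
  have hw' : w' ∈ M.W := (hM.1 a _ hR).2
  exact hψ w' (hM.eval_statics hw') (h M hM w hw (hφ w (hM.eval_statics hw) hφ') w' hR)

theorem EntailsL.effect_neg {φ ψ : Fml α} {a : β} (h : EntailsL T (Law.static φ)) :
    EntailsL T (Law.effect (Fml.neg φ) ψ a) := by
  intro M hM w hw hneg
  simp [Fml.eval, show Fml.eval w φ = true from h M hM w hw] at hneg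

end Entailment

/-- Monotonicity of contraction: `T` globally entails every formula of every theory
`T' ∈ T ⊖ Φ` produced by the contraction algorithms. -/
theorem contraction_monotonicity {α β : Type} (T : Set (Law α β)) (Φ : Law α β)
    (T' : Set (Law α β)) (h : ContractOut T Φ T') :
    ∀ L ∈ T', EntailsL T L := by
  intro L hL
  cases h with
  | keep Φ _ => exact .of_mem hL
  | exec φ χ a _ _ =>
      rcases hL with hL | ⟨φi, hφi, rfl⟩
      · exact .of_mem hL.1
      · exact (EntailsL.of_mem hφi).exec_mono Fml.and_entails_left.entailsUnder
  | effect φ ψ χ π' a Em Lits hent hEm hχ _ =>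
      rcases hL with ((hL | ⟨φi, ψi, hmem, rfl⟩) | ⟨φi, ψi, hmem, rfl⟩) | ⟨ℓ, _, rfl⟩
      · exact .of_mem hL.1
      · exact (EntailsL.of_mem (hEm hmem).1).effect_mono
          Fml.and_entails_left.entailsUnder (.refl _)
      · exact (EntailsL.of_mem (hEm hmem).1).effect_mono
          Fml.and_entails_left.entailsUnder Fml.entails_or_left.entailsUnder
      · exact hent.effect_mono (Fml.and_entails_left.entailsUnder.trans hχ)
          Fml.entails_or_left.entailsUnder
  | static φ Sm hent hSm =>
      rcases hL with ((⟨σ, hσ, rfl⟩ | hL) | ⟨φi, a, hφi, rfl⟩) | ⟨a, rfl⟩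
      · exact .static_of_statics fun v hv => hSm v hv σ hσ
      · exact .of_mem hL.1
      · exact (EntailsL.of_mem hφi).exec_mono Fml.and_entails_left.entailsUnder
      · exact hent.effect_neg
end
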